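/- Let (X,d,μ) be a metric space with ternary operator μ satisfying the control condition d(μ(a,b,c),μ(a',b,c)) ≤ ρ(d(a,a')) (and symmetry (M2), (M1)), and suppose the coarse five point condition holds with constant κ5: d(μ(x,y,μ(z,v,w)), μ(μ(x,y,z),μ(x,y,v),w)) ≤ κ5 for all x,y,z,v,w. Then with C_1 = κ5 and C_n = ρ(C_{n-1}) + κ5, for all a,b,e1,...,e_{n+1} ∈ X: d(μ(a,e_{n+1},μ(e1,...,en;b)), μ(μ(a,e_{n+1},e1),...,μ(a,e_{n+1},en);b)) ≤ C_n, where iterated coarse medians are defined recursively as μ(x1,...,x_{k+1};b)=μ(μ(x1,...,xk;b),x_{k+1},b). -/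
import Mathlib


/-- Iterated coarse median: `iterMed μ b x₁ [x₂,…,x_k] = μ(x₁,…,x_k; b)`. -/
def iterMed {X : Type*} (μ : X → X → X → X) (b : X) (x : X) (l : List X) : X :=
  l.foldl (fun acc y => μ acc y b) x

/-- `Cn ρ κ5 k` is the constant `C_{k+1}` of the paper: `C₁ = κ₅`,
`C_n = ρ(C_{n-1}) + κ₅`. -/
def Cn (ρ : ℝ → ℝ) (κ5 : ℝ) : ℕ → ℝ
  | 0 => κ5
  | (k + 1) => ρ (Cn ρ κ5 k) + κ5

/-- Coarse (n+2)-point condition: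
`d(μ(a,e_{n+1},μ(e₁,…,e_n;b)), μ(μ(a,e_{n+1},e₁),…,μ(a,e_{n+1},e_n);b)) ≤ C_n`.
The points `e₁,…,e_n` are a head `e1` with tail list `l`, `n = l.length + 1`,
and `en1` plays the role of `e_{n+1}`. -/
theorem stmt7 {X : Type*} [MetricSpace X] (μ : X → X → X → X)
    (ρ : ℝ → ℝ) (κ5 : ℝ) (hρ : Monotone ρ)
    (M1 : ∀ a b, μ a a b = a)
    (M2a : ∀ a b c, μ a b c = μ b a c)
    (M2b : ∀ a b c, μ a b c = μ a c b)
    (C1 : ∀ a a' b c : X, dist (μ a b c) (μ a' b c) ≤ ρ (dist a a'))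
    (five : ∀ x y z v w : X,
      dist (μ x y (μ z v w)) (μ (μ x y z) (μ x y v) w) ≤ κ5) :
    ∀ (a en1 b e1 : X) (l : List X),
      dist (μ a en1 (iterMed μ b e1 l))
        (iterMed μ b (μ a en1 e1) (l.map fun x => μ a en1 x)) ≤
      Cn ρ κ5 l.length := by
  intro a en1 b e1 l
  induction l using List.reverseRecOn with
  | nil =>
    simp [iterMed, Cn]
    exact le_trans dist_nonneg (five a a a a a)
  | append_singleton l y ih =>
    have hM : iterMed μ b e1 (l ++ [y]) = μ (iterMed μ b e1 l) y b := by
      simp [iterMed]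
    have hM' : iterMed μ b (μ a en1 e1) ((l ++ [y]).map fun x => μ a en1 x)
        = μ (iterMed μ b (μ a en1 e1) (l.map fun x => μ a en1 x)) (μ a en1 y) b := by
      simp [iterMed]
    rw [hM, hM']
    set M := iterMed μ b e1 l
    set M' := iterMed μ b (μ a en1 e1) (l.map fun x => μ a en1 x)
    have hlen : (l ++ [y]).length = l.length + 1 := by simp
    rw [hlen]
    show _ ≤ ρ (Cn ρ κ5 l.length) + κ5
    calc dist (μ a en1 (μ M y b)) (μ M' (μ a en1 y) b)
        ≤ dist (μ a en1 (μ M y b)) (μ (μ a en1 M) (μ a en1 y) b)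
          + dist (μ (μ a en1 M) (μ a en1 y) b) (μ M' (μ a en1 y) b) := dist_triangle _ _ _
      _ ≤ κ5 + ρ (Cn ρ κ5 l.length) :=
          add_le_add (five a en1 M y b) (le_trans (C1 _ _ _ _) (hρ ih))
      _ = ρ (Cn ρ κ5 l.length) + κ5 := add_comm _ _
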